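/- Let k ≥ 1 and let a_1 < a_2 < … < a_k be positive integers, A = {a_1,…,a_k}. In ℤ[[x,y,ℓ,d]] set b_j = x^{a_j}·y, and let G_A(x;y;ℓ,d) = ∑_{n≥0} ∑_{σ∈G_n^A} x^n y^{parts(σ)} ℓ^{levels(σ)} d^{drops(σ)}. Then ( G_A(x;y;ℓ,d) − 1 ) · ( ∏_{j=1}^k (1 − b_j(ℓ−d)) − d·∑_{j=1}^k b_j · ∏_{i=1}^{j−1}(1 − b_i·ℓ) · ∏_{i=j+1}^{k}(1 − b_i(ℓ−d)) ) = ∑_{j=1}^k b_j · ∏_{i=1}^{j−1}(1 − b_i·ℓ) · ∏_{i=j+1}^{k}(1 − b_i(ℓ−d)). (This is the denominator-cleared form of G_A = 1 + S/(1 − d·S) with S = ∑_j (b_j/(1−b_j(ℓ−d)))∏_{i<j}(1−b_iℓ)/(1−b_i(ℓ−d)).) -/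

import Mathlib

open scoped Classical

open MvPowerSeries

/-- Number of rises of a list (adjacent pairs with strict increase). -/
def risesL (l : List ℕ) : ℕ := (l.zip l.tail).countP (fun p => decide (p.1 < p.2))

/-- Number of levels of a list (adjacent equal pairs). -/
def levelsL (l : List ℕ) : ℕ := (l.zip l.tail).countP (fun p => decide (p.1 = p.2))

/-- Number of drops of a list (adjacent pairs with strict decrease). -/
def dropsL (l : List ℕ) : ℕ := (l.zip l.tail).countP (fun p => decide (p.2 < p.1))

/-- The generating function `G_A(x;y;ℓ,d)` in `ℤ[[x,y,ℓ,d]]`, with `x = X 0`,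
`y = X 1`, `ℓ = X 2`, `d = X 3`: the coefficient of `x^n y^p ℓ^t d^u` is the
number of partitions of `n` (compositions with no rises) with parts in
`A = {a 1, …, a k}`, with `p` parts, `t` levels and `u` drops. -/
noncomputable def GA {k : ℕ} (a : Fin k → ℕ) : MvPowerSeries (Fin 4) ℤ :=
  fun m => ((Finset.univ.filter (fun c : Composition (m 0) =>
      (∀ p ∈ c.blocks, ∃ i, a i = p) ∧ risesL c.blocks = 0 ∧ c.length = m 1 ∧
      levelsL c.blocks = m 2 ∧ dropsL c.blocks = m 3)).card : ℤ)

/-- `b j = x^{a_j} · y`. -/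
noncomputable def bb {k : ℕ} (a : Fin k → ℕ) (j : Fin k) : MvPowerSeries (Fin 4) ℤ :=
  (X 0) ^ (a j) * X 1

lemma risesL_nil : risesL [] = 0 := rfl
lemma levelsL_nil : levelsL [] = 0 := rfl
lemma dropsL_nil : dropsL [] = 0 := rfl
lemma risesL_single (x : ℕ) : risesL [x] = 0 := rfl
lemma levelsL_single (x : ℕ) : levelsL [x] = 0 := rfl
lemma dropsL_single (x : ℕ) : dropsL [x] = 0 := rfl

lemma risesL_cons2 (x y : ℕ) (r : List ℕ) :
    risesL (x :: y :: r) = risesL (y :: r) + (if x < y then 1 else 0) := by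
  simp [risesL, List.countP_cons]
lemma levelsL_cons2 (x y : ℕ) (r : List ℕ) :
    levelsL (x :: y :: r) = levelsL (y :: r) + (if x = y then 1 else 0) := by
  simp [levelsL, List.countP_cons]
lemma dropsL_cons2 (x y : ℕ) (r : List ℕ) :
    dropsL (x :: y :: r) = dropsL (y :: r) + (if y < x then 1 else 0) := by
  simp [dropsL, List.countP_cons]

lemma fin4_finsupp_eq_zero {f : Fin 4 →₀ ℕ} (h0 : f 0 = 0) (h1 : f 1 = 0)
    (h2 : f 2 = 0) (h3 : f 3 = 0) : f = 0 := by
  ext x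
  obtain ⟨n, hn⟩ := x
  interval_cases n
  exacts [h0, h1, h2, h3]

lemma blocks_eq_nil_of_zero {n : ℕ} (hn : n = 0) (c : Composition n) : c.blocks = [] := by
  cases h : c.blocks with
  | nil => rfl
  | cons x r =>
    have hs := c.blocks_sum
    rw [h] at hs
    have hx := c.blocks_pos (h ▸ (List.mem_cons_self : x ∈ x :: r))
    simp only [List.sum_cons] at hs
    omega

section algebra

variable {R : Type*} [CommRing R]

lemma telescope {u v b : ℕ → R} {d : R} (h : ∀ i, v i = u i + d * b i) (n : ℕ) :
    (∏ i ∈ Finset.range n, v i) - ∏ i ∈ Finset.range n, u i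
      = d * ∑ j ∈ Finset.range n, b j * (∏ i ∈ Finset.range j, u i) *
          ∏ i ∈ Finset.Ico (j + 1) n, v i := by
  induction n with
  | zero => simp
  | succ n ih =>
    have hrwv : ∀ j ∈ Finset.range n, b j * (∏ i ∈ Finset.range j, u i) *
        ∏ i ∈ Finset.Ico (j + 1) (n + 1), v i
        = (b j * (∏ i ∈ Finset.range j, u i) * ∏ i ∈ Finset.Ico (j + 1) n, v i) * v n := by
      intro j hj
      rw [Finset.prod_Ico_succ_top (Nat.succ_le_of_lt (Finset.mem_range.mp hj)) v]
      ring
    rw [Finset.prod_range_succ, Finset.prod_range_succ, Finset.sum_range_succ,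
      Finset.sum_congr rfl hrwv, ← Finset.sum_mul]
    simp only [Finset.Ico_self, Finset.prod_empty, mul_one]
    linear_combination v n * ih + (∏ i ∈ Finset.range n, u i) * h n

lemma mirror {u v b : ℕ → R} {d : R} (h : ∀ i, v i = u i + d * b i) (n : ℕ) :
    ∑ j ∈ Finset.range n, b j * (∏ i ∈ Finset.range j, u i) *
        ∏ i ∈ Finset.Ico (j + 1) n, v i
      = ∑ j ∈ Finset.range n, b j * (∏ i ∈ Finset.range j, v i) *
        ∏ i ∈ Finset.Ico (j + 1) n, u i := by
  induction n with
  | zero => simp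
  | succ n ih =>
    have hrwv : ∀ j ∈ Finset.range n, b j * (∏ i ∈ Finset.range j, u i) *
        ∏ i ∈ Finset.Ico (j + 1) (n + 1), v i
        = (b j * (∏ i ∈ Finset.range j, u i) * ∏ i ∈ Finset.Ico (j + 1) n, v i) * v n := by
      intro j hj
      rw [Finset.prod_Ico_succ_top (Nat.succ_le_of_lt (Finset.mem_range.mp hj)) v]
      ring
    have hrwu : ∀ j ∈ Finset.range n, b j * (∏ i ∈ Finset.range j, v i) *
        ∏ i ∈ Finset.Ico (j + 1) (n + 1), u i
        = (b j * (∏ i ∈ Finset.range j, v i) * ∏ i ∈ Finset.Ico (j + 1) n, u i) * u n := by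
      intro j hj
      rw [Finset.prod_Ico_succ_top (Nat.succ_le_of_lt (Finset.mem_range.mp hj)) u]
      ring
    rw [Finset.sum_range_succ, Finset.sum_range_succ, Finset.sum_congr rfl hrwv,
      Finset.sum_congr rfl hrwu, ← Finset.sum_mul, ← Finset.sum_mul]
    simp only [Finset.Ico_self, Finset.prod_empty, mul_one]
    have tel := telescope h n
    linear_combination (∑ j ∈ Finset.range n, b j * (∏ i ∈ Finset.range j, u i) *
      ∏ i ∈ Finset.Ico (j + 1) n, v i) * h n - b n * tel + u n * ih

lemma Tprod (u v : ℕ → R) (T : ℕ → R) (hT0 : T 0 = 1)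
    (hstep : ∀ n, T (n + 1) * u n = T n * v n) (n : ℕ) :
    T n * ∏ i ∈ Finset.range n, u i = ∏ i ∈ Finset.range n, v i := by
  induction n with
  | zero => simpa using hT0
  | succ n ih =>
    rw [Finset.prod_range_succ, Finset.prod_range_succ]
    calc T (n + 1) * ((∏ i ∈ Finset.range n, u i) * u n)
        = (T (n + 1) * u n) * ∏ i ∈ Finset.range n, u i := by ring
      _ = (T n * v n) * ∏ i ∈ Finset.range n, u i := by rw [hstep n]
      _ = (T n * ∏ i ∈ Finset.range n, u i) * v n := by ring
      _ = (∏ i ∈ Finset.range n, v i) * v n := by rw [ih]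
end algebra

section conv
variable {M : Type*} [CommMonoid M] {k : ℕ}

@[to_additive]
lemma prod_fin_eq_range (f : Fin k → M) (g : ℕ → M) (hg : ∀ i : Fin k, g i.val = f i) :
    ∏ i : Fin k, f i = ∏ i ∈ Finset.range k, g i := by
  rw [← Fin.prod_univ_eq_prod_range g k]
  exact Finset.prod_congr rfl fun i _ => (hg i).symm

@[to_additive]
lemma prod_filter_lt (j : Fin k) (f : Fin k → M) (g : ℕ → M)
    (hg : ∀ i : Fin k, g i.val = f i) :
    ∏ i ∈ Finset.univ.filter (· < j), f i = ∏ i ∈ Finset.range j.val, g i := by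
  refine Finset.prod_bij' (fun i _ => (i : ℕ))
    (fun n hn => ⟨n, lt_trans (Finset.mem_range.mp hn) j.isLt⟩) ?_ ?_ ?_ ?_ ?_
  · intro i hi
    rw [Finset.mem_range]
    exact (Finset.mem_filter.mp hi).2
  · intro n hn
    simp only [Finset.mem_filter, Finset.mem_univ, true_and]
    exact Finset.mem_range.mp hn
  · intro i hi
    exact Fin.ext rfl
  · intro n hn
    rfl
  · intro i hi
    exact (hg i).symm

@[to_additive]
lemma prod_filter_gt (j : Fin k) (f : Fin k → M) (g : ℕ → M)
    (hg : ∀ i : Fin k, g i.val = f i) :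
    ∏ i ∈ Finset.univ.filter (j < ·), f i = ∏ i ∈ Finset.Ico (j.val + 1) k, g i := by
  refine Finset.prod_bij' (fun i _ => (i : ℕ))
    (fun n hn => ⟨n, (Finset.mem_Ico.mp hn).2⟩) ?_ ?_ ?_ ?_ ?_
  · intro i hi
    rw [Finset.mem_Ico]
    exact ⟨(Finset.mem_filter.mp hi).2, i.isLt⟩
  · intro n hn
    simp only [Finset.mem_filter, Finset.mem_univ, true_and]
    exact Nat.lt_of_succ_le (Finset.mem_Ico.mp hn).1
  · intro i hi
    exact Fin.ext rfl
  · intro n hn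
    rfl
  · intro i hi
    exact (hg i).symm
end conv

section main
variable {k : ℕ} (a : Fin k → ℕ)

noncomputable def cnt (v : ℕ) (m : Fin 4 →₀ ℕ) : ℕ :=
  (Finset.univ.filter (fun c : Composition (m 0) =>
      (∀ x ∈ c.blocks, ∃ i, a i = x) ∧ risesL c.blocks = 0 ∧ c.blocks.head? = some v ∧
      c.length = m 1 ∧ levelsL c.blocks = m 2 ∧ dropsL c.blocks = m 3)).card

noncomputable def Fv (v : ℕ) : MvPowerSeries (Fin 4) ℤ := fun m => (cnt a v m : ℤ)

lemma coeff_Fv (v : ℕ) (m : Fin 4 →₀ ℕ) : coeff m (Fv a v) = (cnt a v m : ℤ) := rfl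

noncomputable def idxa (hk : 1 ≤ k) (w : ℕ) : Fin k :=
  if h : ∃ i, a i = w then h.choose else ⟨0, hk⟩

lemma idxa_eq (hmono : StrictMono a) (hk : 1 ≤ k) {w : ℕ} {i : Fin k} (h : a i = w) :
    idxa a hk w = i := by
  unfold idxa
  rw [dif_pos ⟨i, h⟩]
  exact hmono.injective ((Exists.choose_spec (⟨i, h⟩ : ∃ i, a i = w)).trans h.symm)

lemma core (v w N : ℕ) (m₂ : Fin 4 →₀ ℕ) (hN : N = v + m₂ 0) (hv : 0 < v)
    (hva : ∃ i, a i = v) (hwv : ¬ v < w) :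
    (Finset.univ.filter (fun c : Composition N =>
        (∀ x ∈ c.blocks, ∃ i, a i = x) ∧ risesL c.blocks = 0 ∧ c.blocks.head? = some v ∧
        c.blocks.tail.head? = some w ∧
        c.length = m₂ 1 + 1 ∧ levelsL c.blocks = m₂ 2 + (if v = w then 1 else 0) ∧
        dropsL c.blocks = m₂ 3 + (if w < v then 1 else 0))).card
    = cnt a w m₂ := by
  subst hN
  refine Finset.card_bij'
    (fun c hc => (⟨c.blocks.tail,
      fun hi => c.blocks_pos (List.mem_of_mem_tail hi), by
        have hc' := (Finset.mem_filter.mp hc).2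
        have hb : c.blocks = v :: c.blocks.tail :=
          List.eq_cons_of_mem_head? (by rw [hc'.2.2.1]; rfl)
        have := c.blocks_sum
        rw [hb] at this
        simpa using this⟩ : Composition (m₂ 0)))
    (fun c hc => (⟨v :: c.blocks,
      fun hi => by
        rcases List.mem_cons.mp hi with h | h
        · omega
        · exact c.blocks_pos h, by
        simp [c.blocks_sum]⟩ : Composition (v + m₂ 0)))
    ?hi ?hj ?li ?ri
  case hi =>
    intro c hc
    obtain ⟨hP, hr, hh, hth, hl, hlev, hdr⟩ := (Finset.mem_filter.mp hc).2
    have hb : c.blocks = v :: c.blocks.tail :=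
      List.eq_cons_of_mem_head? (by rw [hh]; rfl)
    have hb2 : c.blocks.tail = w :: c.blocks.tail.tail :=
      List.eq_cons_of_mem_head? (by rw [hth]; rfl)
    simp only [Finset.mem_filter, Finset.mem_univ, true_and]
    refine ⟨fun x hx => hP x (hb ▸ List.mem_cons_of_mem _ hx), ?_, ?_, ?_, ?_, ?_⟩
    · rw [hb, hb2, risesL_cons2] at hr
      rw [hb2]
      exact Nat.eq_zero_of_add_eq_zero_right hr
    · exact hth
    · have hl' : c.blocks.length = m₂ 1 + 1 := hl
      rw [hb] at hl'
      simpa [Composition.length] using hl'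
    · rw [hb, hb2, levelsL_cons2] at hlev
      rw [hb2]
      exact Nat.add_right_cancel hlev
    · rw [hb, hb2, dropsL_cons2] at hdr
      rw [hb2]
      exact Nat.add_right_cancel hdr
  case hj =>
    intro c hc
    obtain ⟨hP, hr, hh, hl, hlev, hdr⟩ := (Finset.mem_filter.mp hc).2
    have hb : c.blocks = w :: c.blocks.tail :=
      List.eq_cons_of_mem_head? (by rw [hh]; rfl)
    simp only [Finset.mem_filter, Finset.mem_univ, true_and]
    refine ⟨?_, ?_, rfl, hh, ?_, ?_, ?_⟩
    · intro x hx
      rcases List.mem_cons.mp hx with h | h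
      · exact h ▸ hva
      · exact hP x h
    · show risesL (v :: c.blocks) = 0
      rw [hb, risesL_cons2, ← hb]
      simp [hr, hwv]
    · show (v :: c.blocks).length = m₂ 1 + 1
      have hl' : c.blocks.length = m₂ 1 := hl
      simp [hl']
    · show levelsL (v :: c.blocks) = _
      rw [hb, levelsL_cons2, ← hb, hlev]
    · show dropsL (v :: c.blocks) = _
      rw [hb, dropsL_cons2, ← hb, hdr]
  case li =>
    intro c hc
    obtain ⟨hP, hr, hh, hth, hl, hlev, hdr⟩ := (Finset.mem_filter.mp hc).2
    have hb : c.blocks = v :: c.blocks.tail :=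
      List.eq_cons_of_mem_head? (by rw [hh]; rfl)
    exact Composition.ext (by simp [← hb])
  case ri =>
    intro c hc
    exact Composition.ext rfl

lemma L2 (hk : 1 ≤ k) (hmono : StrictMono a) (hpos : ∀ i, 0 < a i) (j : Fin k) :
    Fv a (a j) = bb a j * (1 + (X 2 : MvPowerSeries (Fin 4) ℤ) * Fv a (a j)
      + X 3 * ∑ i ∈ Finset.univ.filter (· < j), Fv a (a i)) := by
  have hbb : bb a j = monomial (Finsupp.single 0 (a j) + Finsupp.single 1 1) 1 := by
    rw [bb, X_pow_eq, X_def, monomial_mul_monomial, one_mul]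
  ext m
  rw [hbb, coeff_monomial_mul, one_mul]
  by_cases hle : Finsupp.single (0 : Fin 4) (a j) + Finsupp.single 1 1 ≤ m
  swap
  · rw [if_neg hle, coeff_Fv]
    norm_cast
    rw [cnt, Finset.card_eq_zero, Finset.filter_eq_empty_iff]
    rintro c - ⟨hP, hr, hh, hl, hlev, hdr⟩
    have hb : c.blocks = a j :: c.blocks.tail := List.eq_cons_of_mem_head? (by rw [hh]; rfl)
    have hs := c.blocks_sum
    rw [hb] at hs
    simp only [List.sum_cons] at hs
    have hl' : c.blocks.length = m 1 := hl
    rw [hb] at hl'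
    simp only [List.length_cons] at hl'
    apply hle
    refine (Finsupp.le_iff' _ _ (s := {0, 1}) (Finsupp.support_add.trans
      (Finset.union_subset_union Finsupp.support_single_subset
        Finsupp.support_single_subset))).mpr ?_
    · intro i hi
      rcases Finset.mem_insert.mp hi with rfl | hi
      · simp only [Finsupp.add_apply, Finsupp.single_apply]
        norm_num
        omega
      · rcases Finset.mem_singleton.mp hi with rfl
        simp only [Finsupp.add_apply, Finsupp.single_apply]
        norm_num
        omega
  · rw [if_pos hle]
    have hles := Finsupp.le_def.mp hle
    set m' := m - (Finsupp.single (0 : Fin 4) (a j) + Finsupp.single 1 1) with hm'def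
    have e0 : ((Finsupp.single (0 : Fin 4) (a j) + Finsupp.single 1 1 : Fin 4 →₀ ℕ)) 0 = a j := by
      simp [Finsupp.single_apply]
    have e1 : ((Finsupp.single (0 : Fin 4) (a j) + Finsupp.single 1 1 : Fin 4 →₀ ℕ)) 1 = 1 := by
      simp [Finsupp.single_apply]
    have e2 : ((Finsupp.single (0 : Fin 4) (a j) + Finsupp.single 1 1 : Fin 4 →₀ ℕ)) 2 = 0 := by
      simp [Finsupp.single_apply]
    have e3 : ((Finsupp.single (0 : Fin 4) (a j) + Finsupp.single 1 1 : Fin 4 →₀ ℕ)) 3 = 0 := by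
      simp [Finsupp.single_apply]
    have h0 : m 0 = a j + m' 0 := by
      have h := hles 0
      rw [e0] at h
      rw [hm'def, Finsupp.tsub_apply, e0]
      omega
    have h1 : m 1 = m' 1 + 1 := by
      have h := hles 1
      rw [e1] at h
      rw [hm'def, Finsupp.tsub_apply, e1]
      omega
    have h2 : m' 2 = m 2 := by rw [hm'def, Finsupp.tsub_apply, e2]; omega
    have h3 : m' 3 = m 3 := by rw [hm'def, Finsupp.tsub_apply, e3]; omega
    rw [map_add, map_add, coeff_one, X_def, X_def, coeff_monomial_mul, coeff_monomial_mul,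
      one_mul, one_mul, map_sum]
    simp only [coeff_Fv]
    have hc2 : (Finsupp.single (2 : Fin 4) 1 ≤ m') = (1 ≤ m 2) := by
      rw [Finsupp.single_le_iff, h2]
    have hc3 : (Finsupp.single (3 : Fin 4) 1 ≤ m') = (1 ≤ m 3) := by
      rw [Finsupp.single_le_iff, h3]
    simp only [hc2, hc3]
    have keyN : cnt a (a j) m =
        (if m' = 0 then 1 else 0)
        + (if 1 ≤ m 2 then cnt a (a j) (m' - Finsupp.single 2 1) else 0)
        + (if 1 ≤ m 3 then ∑ i ∈ Finset.univ.filter (· < j),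
            cnt a (a i) (m' - Finsupp.single 3 1) else 0) := by
      set S := (Finset.univ.filter (fun c : Composition (m 0) =>
        (∀ x ∈ c.blocks, ∃ i, a i = x) ∧ risesL c.blocks = 0 ∧ c.blocks.head? = some (a j) ∧
        c.length = m 1 ∧ levelsL c.blocks = m 2 ∧ dropsL c.blocks = m 3)) with hSdef
      have hcnt : cnt a (a j) m = S.card := rfl
      set SA := S.filter (fun c => c.blocks.tail = []) with hSAdef
      set SR := S.filter (fun c => ¬ c.blocks.tail = []) with hSRdef
      set SB1 := SR.filter (fun c => c.blocks.tail.head? = some (a j)) with hSB1def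
      set SB2 := SR.filter (fun c => ¬ c.blocks.tail.head? = some (a j)) with hSB2def
      have split1 : S.card = SA.card + SR.card :=
        (Finset.card_filter_add_card_filter_not _).symm
      have split2 : SR.card = SB1.card + SB2.card :=
        (Finset.card_filter_add_card_filter_not _).symm
      have hA : SA.card = if m' = 0 then 1 else 0 := by
        by_cases hz : m' = 0
        · rw [if_pos hz]
          have hz0 : m' 0 = 0 := by rw [hz]; rfl
          have hz1 : m' 1 = 0 := by rw [hz]; rfl
          have hz2 : m' 2 = 0 := by rw [hz]; rfl
          have hz3 : m' 3 = 0 := by rw [hz]; rfl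
          refine Finset.card_eq_one.mpr ⟨⟨[a j], ?_, ?_⟩, ?_⟩
          · intro i hi
            rw [List.mem_singleton] at hi
            exact hi ▸ hpos j
          · simp only [List.sum_cons, List.sum_nil]
            omega
          · ext c
            simp only [hSAdef, hSdef, Finset.mem_filter, Finset.mem_univ, true_and,
              Finset.mem_singleton]
            constructor
            · rintro ⟨⟨hP', hr, hh, hl, hlev, hdr⟩, htl⟩
              apply Composition.ext
              have hb : c.blocks = a j :: c.blocks.tail :=
                List.eq_cons_of_mem_head? (by rw [hh]; rfl)
              rw [hb, htl]
            · rintro rfl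
              refine ⟨⟨?_, risesL_single _, rfl, ?_, ?_, ?_⟩, rfl⟩
              · intro x hx; rw [List.mem_singleton] at hx; exact ⟨j, hx.symm⟩
              · show ([a j]).length = m 1
                simp only [List.length_singleton]
                omega
              · show levelsL [a j] = m 2
                rw [levelsL_single]; omega
              · show dropsL [a j] = m 3
                rw [dropsL_single]; omega
        · rw [if_neg hz]
          rw [hSAdef, Finset.card_eq_zero, Finset.filter_eq_empty_iff]
          intro c hcS htl
          rw [hSdef, Finset.mem_filter] at hcS
          obtain ⟨-, hP', hr, hh, hl, hlev, hdr⟩ := hcS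
          have hb : c.blocks = a j :: c.blocks.tail :=
            List.eq_cons_of_mem_head? (by rw [hh]; rfl)
          rw [htl] at hb
          have hsum := c.blocks_sum
          rw [hb] at hsum
          simp only [List.sum_cons, List.sum_nil] at hsum
          have hlen : c.blocks.length = m 1 := hl
          rw [hb] at hlen
          simp only [List.length_singleton] at hlen
          have hlev' := hlev
          rw [hb, levelsL_single] at hlev'
          have hdr' := hdr
          rw [hb, dropsL_single] at hdr'
          exact hz (fin4_finsupp_eq_zero (by omega) (by omega) (by omega) (by omega))
      have hB1 : SB1.card = if 1 ≤ m 2 then cnt a (a j) (m' - Finsupp.single 2 1) else 0 := by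
        have g0 : (m' - (Finsupp.single 2 1 : Fin 4 →₀ ℕ)) 0 = m' 0 := by
          rw [Finsupp.tsub_apply]; simp [Finsupp.single_apply]
        have g1 : (m' - (Finsupp.single 2 1 : Fin 4 →₀ ℕ)) 1 = m' 1 := by
          rw [Finsupp.tsub_apply]; simp [Finsupp.single_apply]
        have g2 : (m' - (Finsupp.single 2 1 : Fin 4 →₀ ℕ)) 2 = m' 2 - 1 := by
          rw [Finsupp.tsub_apply]; simp [Finsupp.single_apply]
        have g3 : (m' - (Finsupp.single 2 1 : Fin 4 →₀ ℕ)) 3 = m' 3 := by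
          rw [Finsupp.tsub_apply]; simp [Finsupp.single_apply]
        by_cases ht : 1 ≤ m 2
        · rw [if_pos ht]
          rw [← core a (a j) (a j) (m 0) (m' - Finsupp.single 2 1) (by rw [g0]; omega)
            (hpos j) ⟨j, rfl⟩ (lt_irrefl _)]
          congr 1
          ext c
          simp only [hSB1def, hSRdef, hSdef, Finset.mem_filter, Finset.mem_univ, true_and]
          constructor
          · rintro ⟨⟨⟨hP', hr, hh, hl, hlev, hdr⟩, hne⟩, hth⟩
            refine ⟨hP', hr, hh, hth, ?_, ?_, ?_⟩
            · rw [g1]; omega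
            · rw [g2]
              split_ifs with hcc
              · omega
              · exact absurd (by trivial) hcc
            · rw [g3]
              split_ifs with hcc
              · exact absurd hcc (lt_irrefl _)
              · omega
          · rintro ⟨hP', hr, hh, hth, hl, hlev, hdr⟩
            rw [g1] at hl
            rw [g2] at hlev
            rw [g3] at hdr
            have hlev' : levelsL c.blocks = m' 2 - 1 + 1 := by
              split_ifs at hlev with hcc
              · exact hlev
              · exact absurd (by trivial) hcc
            have hdr' : dropsL c.blocks = m' 3 := by
              split_ifs at hdr with hcc
              · exact absurd hcc (lt_irrefl _)
              · omega
            refine ⟨⟨⟨hP', hr, hh, by omega, by omega, by omega⟩, ?_⟩, hth⟩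
            intro hnil
            rw [hnil] at hth
            cases hth
        · rw [if_neg ht]
          rw [hSB1def, Finset.card_eq_zero, Finset.filter_eq_empty_iff]
          intro c hcS hth
          rw [hSRdef, Finset.mem_filter] at hcS
          obtain ⟨hcS', hne⟩ := hcS
          rw [hSdef, Finset.mem_filter] at hcS'
          obtain ⟨-, hP', hr, hh, hl, hlev, hdr⟩ := hcS'
          have hb : c.blocks = a j :: c.blocks.tail :=
            List.eq_cons_of_mem_head? (by rw [hh]; rfl)
          have hb2 : c.blocks.tail = a j :: c.blocks.tail.tail :=
            List.eq_cons_of_mem_head? (by rw [hth]; rfl)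
          rw [hb, hb2, levelsL_cons2] at hlev
          split_ifs at hlev with hcc
          · omega
          · exact absurd (by trivial) hcc
      have hB2 : SB2.card = if 1 ≤ m 3 then ∑ i ∈ Finset.univ.filter (· < j),
          cnt a (a i) (m' - Finsupp.single 3 1) else 0 := by
        have g0 : (m' - (Finsupp.single 3 1 : Fin 4 →₀ ℕ)) 0 = m' 0 := by
          rw [Finsupp.tsub_apply]; simp [Finsupp.single_apply]
        have g1 : (m' - (Finsupp.single 3 1 : Fin 4 →₀ ℕ)) 1 = m' 1 := by
          rw [Finsupp.tsub_apply]; simp [Finsupp.single_apply]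
        have g2 : (m' - (Finsupp.single 3 1 : Fin 4 →₀ ℕ)) 2 = m' 2 := by
          rw [Finsupp.tsub_apply]; simp [Finsupp.single_apply]
        have g3 : (m' - (Finsupp.single 3 1 : Fin 4 →₀ ℕ)) 3 = m' 3 - 1 := by
          rw [Finsupp.tsub_apply]; simp [Finsupp.single_apply]
        by_cases hu : 1 ≤ m 3
        · rw [if_pos hu]
          have hmaps : ∀ c ∈ SB2, idxa a hk (c.blocks.tail.head?.getD 0)
              ∈ Finset.univ.filter (· < j) := by
            intro c hc
            rw [hSB2def, Finset.mem_filter] at hc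
            obtain ⟨hcS, hth⟩ := hc
            rw [hSRdef, Finset.mem_filter] at hcS
            obtain ⟨hcS', hne⟩ := hcS
            rw [hSdef, Finset.mem_filter] at hcS'
            obtain ⟨-, hP', hr, hh, hl, hlev, hdr⟩ := hcS'
            obtain ⟨y, ys, hys⟩ := List.exists_cons_of_ne_nil hne
            have hth' : c.blocks.tail.head? = some y := by rw [hys]; rfl
            have hb : c.blocks = a j :: c.blocks.tail :=
              List.eq_cons_of_mem_head? (by rw [hh]; rfl)
            have hymem : y ∈ c.blocks := by
              rw [hb, hys]
              exact List.mem_cons_of_mem _ List.mem_cons_self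
            obtain ⟨i, hi⟩ := hP' y hymem
            have hidx : idxa a hk (c.blocks.tail.head?.getD 0) = i := by
              rw [hth']
              exact idxa_eq a hmono hk hi
            rw [hidx]
            simp only [Finset.mem_filter, Finset.mem_univ, true_and]
            have hr' := hr
            rw [hb, hys, risesL_cons2] at hr'
            have hy_lt : ¬ a j < y := by
              intro hlt
              split_ifs at hr' <;> omega
            have hy_ne : y ≠ a j := fun heq => hth (by rw [hth', heq])
            have : a i < a j := hi ▸ lt_of_le_of_ne (not_lt.mp hy_lt) hy_ne
            exact hmono.lt_iff_lt.mp this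
          rw [Finset.card_eq_sum_card_fiberwise hmaps]
          refine Finset.sum_congr rfl fun i hi => ?_
          have hij : i < j := (Finset.mem_filter.mp hi).2
          have hANe : a j ≠ a i := fun h => absurd (hmono.injective h).symm (ne_of_lt hij)
          have hlt : a i < a j := hmono hij
          rw [← core a (a j) (a i) (m 0) (m' - Finsupp.single 3 1) (by rw [g0]; omega)
            (hpos j) ⟨j, rfl⟩ (asymm hlt)]
          congr 1
          ext c
          simp only [hSB2def, hSRdef, hSdef, Finset.mem_filter, Finset.mem_univ, true_and]
          constructor
          · rintro ⟨⟨⟨⟨hP', hr, hh, hl, hlev, hdr⟩, hne⟩, hth⟩, hfib⟩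
            obtain ⟨y, ys, hys⟩ := List.exists_cons_of_ne_nil hne
            have hth' : c.blocks.tail.head? = some y := by rw [hys]; rfl
            have hb : c.blocks = a j :: c.blocks.tail :=
              List.eq_cons_of_mem_head? (by rw [hh]; rfl)
            have hymem : y ∈ c.blocks := by
              rw [hb, hys]
              exact List.mem_cons_of_mem _ List.mem_cons_self
            obtain ⟨i', hi'⟩ := hP' y hymem
            rw [hth'] at hfib
            simp only [Option.getD_some] at hfib
            have : i' = i := by rw [← hfib]; exact (idxa_eq a hmono hk hi').symm
            have hyi : y = a i := by rw [← hi', this]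
            refine ⟨hP', hr, hh, by rw [hth', hyi], ?_, ?_, ?_⟩
            · rw [g1]; omega
            · rw [g2]
              split_ifs with hcc
              · exact absurd hcc hANe
              · omega
            · rw [g3]
              split_ifs <;> omega
          · rintro ⟨hP', hr, hh, hth, hl, hlev, hdr⟩
            rw [g1] at hl
            rw [g2] at hlev
            rw [g3] at hdr
            have hlev' : levelsL c.blocks = m' 2 := by
              split_ifs at hlev with hcc
              · exact absurd hcc hANe
              · omega
            have hdr2 : dropsL c.blocks = m' 3 - 1 + 1 := by
              split_ifs at hdr <;> omega
            refine ⟨⟨⟨⟨hP', hr, hh, by omega, by omega, by omega⟩, ?_⟩, ?_⟩, ?_⟩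
            · intro hnil; rw [hnil] at hth; cases hth
            · rw [hth]
              intro hcon
              exact hANe (Option.some.inj hcon).symm
            · rw [hth]
              simp only [Option.getD_some]
              exact idxa_eq a hmono hk rfl
        · rw [if_neg hu]
          rw [hSB2def, Finset.card_eq_zero, Finset.filter_eq_empty_iff]
          intro c hcS hth
          rw [hSRdef, Finset.mem_filter] at hcS
          obtain ⟨hcS', hne⟩ := hcS
          rw [hSdef, Finset.mem_filter] at hcS'
          obtain ⟨-, hP', hr, hh, hl, hlev, hdr⟩ := hcS'
          obtain ⟨y, ys, hys⟩ := List.exists_cons_of_ne_nil hne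
          have hth' : c.blocks.tail.head? = some y := by rw [hys]; rfl
          have hb : c.blocks = a j :: c.blocks.tail :=
            List.eq_cons_of_mem_head? (by rw [hh]; rfl)
          have hr' := hr
          rw [hb, hys, risesL_cons2] at hr'
          have hy_lt : ¬ a j < y := by
            intro hlt
            split_ifs at hr' <;> omega
          have hy_ne : y ≠ a j := fun heq => hth (by rw [hth', heq])
          have hylt : y < a j := lt_of_le_of_ne (not_lt.mp hy_lt) hy_ne
          have hdr' := hdr
          rw [hb, hys, dropsL_cons2] at hdr'
          split_ifs at hdr' <;> omega
      rw [hcnt, split1, split2, hA, hB1, hB2]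
      ring
    rw [keyN]
    push_cast
    ring

lemma L1 {k : ℕ} (a : Fin k → ℕ) (hk : 1 ≤ k) (hmono : StrictMono a) :
    GA a = 1 + ∑ j : Fin k, Fv a (a j) := by
  ext m
  rw [map_add, map_sum, coeff_one]
  simp only [coeff_Fv]
  rcases eq_or_ne m 0 with rfl | hm
  · rw [if_pos rfl]
    have hF : ∀ j : Fin k, cnt a (a j) 0 = 0 := by
      intro j
      unfold cnt
      refine Finset.card_eq_zero.mpr (Finset.filter_eq_empty_iff.mpr ?_)
      rintro c - ⟨hP', hr, hh, -⟩
      rw [blocks_eq_nil_of_zero rfl c] at hh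
      cases hh
    have hGA : (Finset.univ.filter (fun c : Composition ((0 : Fin 4 →₀ ℕ) 0) =>
        (∀ p ∈ c.blocks, ∃ i, a i = p) ∧ risesL c.blocks = 0 ∧
        c.length = (0 : Fin 4 →₀ ℕ) 1 ∧
        levelsL c.blocks = (0 : Fin 4 →₀ ℕ) 2 ∧
        dropsL c.blocks = (0 : Fin 4 →₀ ℕ) 3)).card = 1 := by
      refine Finset.card_eq_one.mpr ⟨⟨[], by simp, by simp⟩, ?_⟩
      ext c
      simp only [Finset.mem_filter, Finset.mem_univ, true_and, Finset.mem_singleton]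
      constructor
      · intro _
        exact Composition.ext (blocks_eq_nil_of_zero rfl c)
      · rintro rfl
        refine ⟨by simp, rfl, by simp [Composition.length], by simp [levelsL_nil], by simp [dropsL_nil]⟩
    show ((Finset.univ.filter _).card : ℤ) = _
    rw [hGA]
    simp [hF]
  · rw [if_neg hm]
    have key : (Finset.univ.filter (fun c : Composition (m 0) =>
        (∀ p ∈ c.blocks, ∃ i, a i = p) ∧ risesL c.blocks = 0 ∧ c.length = m 1 ∧
        levelsL c.blocks = m 2 ∧ dropsL c.blocks = m 3)).card
        = ∑ j : Fin k, cnt a (a j) m := by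
      rw [Finset.card_eq_sum_card_fiberwise
        (f := fun c => idxa a hk (c.blocks.head?.getD 0)) (t := Finset.univ)
        (fun c _ => Finset.mem_univ _)]
      refine Finset.sum_congr rfl fun j _ => ?_
      unfold cnt
      congr 1
      ext c
      simp only [Finset.mem_filter, Finset.mem_univ, true_and]
      constructor
      · rintro ⟨⟨hP', hr, hl, hlev, hdr⟩, hidx⟩
        have hbne : c.blocks ≠ [] := by
          intro hnil
          apply hm
          have hs := c.blocks_sum
          rw [hnil] at hs
          simp only [List.sum_nil] at hs
          have hl' : c.blocks.length = m 1 := hl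
          rw [hnil] at hl'
          simp only [List.length_nil] at hl'
          rw [hnil, levelsL_nil] at hlev
          rw [hnil, dropsL_nil] at hdr
          exact fin4_finsupp_eq_zero (by omega) (by omega) (by omega) (by omega)
        obtain ⟨y, ys, hys⟩ := List.exists_cons_of_ne_nil hbne
        have hh : c.blocks.head? = some y := by rw [hys]; rfl
        obtain ⟨i', hi'⟩ := hP' y (by rw [hys]; exact List.mem_cons_self)
        have hij : i' = j := by
          rw [← hidx, hh]
          simp only [Option.getD_some]
          exact (idxa_eq a hmono hk hi').symm
        exact ⟨hP', hr, by rw [hh, ← hi', hij], hl, hlev, hdr⟩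
      · rintro ⟨hP', hr, hh, hl, hlev, hdr⟩
        refine ⟨⟨hP', hr, hl, hlev, hdr⟩, ?_⟩
        rw [hh]
        simp only [Option.getD_some]
        exact idxa_eq a hmono hk rfl
    show ((Finset.univ.filter _).card : ℤ) = _
    rw [key]
    push_cast
    ring


noncomputable def uuN (n : ℕ) : MvPowerSeries (Fin 4) ℤ :=
  if h : n < k then 1 - bb a ⟨n, h⟩ * X 2 else 1
noncomputable def vvN (n : ℕ) : MvPowerSeries (Fin 4) ℤ :=
  if h : n < k then 1 - bb a ⟨n, h⟩ * (X 2 - X 3) else 1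
noncomputable def bbN (n : ℕ) : MvPowerSeries (Fin 4) ℤ :=
  if h : n < k then bb a ⟨n, h⟩ else 0
noncomputable def FFN (n : ℕ) : MvPowerSeries (Fin 4) ℤ :=
  if h : n < k then Fv a (a ⟨n, h⟩) else 0
noncomputable def TT (n : ℕ) : MvPowerSeries (Fin 4) ℤ :=
  1 + X 3 * ∑ i ∈ Finset.range n, FFN a i

lemma uuN_lt {n : ℕ} (h : n < k) : uuN a n = 1 - bb a ⟨n, h⟩ * X 2 := dif_pos h
lemma uuN_ge {n : ℕ} (h : ¬ n < k) : uuN a n = 1 := dif_neg h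
lemma vvN_lt {n : ℕ} (h : n < k) : vvN a n = 1 - bb a ⟨n, h⟩ * (X 2 - X 3) := dif_pos h
lemma vvN_ge {n : ℕ} (h : ¬ n < k) : vvN a n = 1 := dif_neg h
lemma bbN_lt {n : ℕ} (h : n < k) : bbN a n = bb a ⟨n, h⟩ := dif_pos h
lemma bbN_ge {n : ℕ} (h : ¬ n < k) : bbN a n = 0 := dif_neg h
lemma FFN_lt {n : ℕ} (h : n < k) : FFN a n = Fv a (a ⟨n, h⟩) := dif_pos h
lemma FFN_ge {n : ℕ} (h : ¬ n < k) : FFN a n = 0 := dif_neg h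

lemma uuN_val (i : Fin k) : uuN a i.val = 1 - bb a i * X 2 := by
  rw [uuN_lt a i.isLt, Fin.eta]
lemma vvN_val (i : Fin k) : vvN a i.val = 1 - bb a i * (X 2 - X 3) := by
  rw [vvN_lt a i.isLt, Fin.eta]
lemma bbN_val (i : Fin k) : bbN a i.val = bb a i := by
  rw [bbN_lt a i.isLt, Fin.eta]
lemma FFN_val (i : Fin k) : FFN a i.val = Fv a (a i) := by
  rw [FFN_lt a i.isLt, Fin.eta]

end main

theorem stmt18 {k : ℕ} (hk : 1 ≤ k) (a : Fin k → ℕ) (hpos : ∀ i, 0 < a i)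
    (hmono : StrictMono a) :
    (GA a - 1) * ((∏ j : Fin k, (1 - bb a j * (X 2 - X 3)))
        - X 3 * ∑ j : Fin k, bb a j
            * (∏ i ∈ Finset.univ.filter (· < j), (1 - bb a i * X 2))
            * (∏ i ∈ Finset.univ.filter (j < ·), (1 - bb a i * (X 2 - X 3))))
    = ∑ j : Fin k, bb a j
        * (∏ i ∈ Finset.univ.filter (· < j), (1 - bb a i * X 2))
        * (∏ i ∈ Finset.univ.filter (j < ·), (1 - bb a i * (X 2 - X 3))) := by
  have hveq : ∀ i, vvN a i = uuN a i + X 3 * bbN a i := by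
    intro i
    by_cases h : i < k
    · rw [vvN_lt a h, uuN_lt a h, bbN_lt a h]; ring
    · rw [vvN_ge a h, uuN_ge a h, bbN_ge a h]; ring
  have l2' : ∀ (n : ℕ) (h : n < k), Fv a (a ⟨n, h⟩) = bb a ⟨n, h⟩
      * (1 + (X 2 : MvPowerSeries (Fin 4) ℤ) * Fv a (a ⟨n, h⟩)
        + X 3 * ∑ i ∈ Finset.range n, FFN a i) := by
    intro n h
    have l2 := L2 a hk hmono hpos ⟨n, h⟩
    rwa [sum_filter_lt (⟨n, h⟩ : Fin k) (fun i => Fv a (a i)) (FFN a)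
      (fun i => FFN_val a i)] at l2
  have hTstep : ∀ n, TT a (n + 1) * uuN a n = TT a n * vvN a n := by
    intro n
    by_cases h : n < k
    · have l2 := l2' n h
      simp only [TT, Finset.sum_range_succ, uuN_lt a h, vvN_lt a h, FFN_lt a h]
      linear_combination (X 3 : MvPowerSeries (Fin 4) ℤ) * l2
    · simp only [TT, Finset.sum_range_succ, uuN_ge a h, vvN_ge a h, FFN_ge a h]
      ring
  have hT0 : TT a 0 = 1 := by simp [TT]
  have hTprodAt : ∀ n, TT a n * ∏ i ∈ Finset.range n, uuN a i
      = ∏ i ∈ Finset.range n, vvN a i := Tprod _ _ _ hT0 hTstep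
  have hFu : ∀ n, FFN a n * uuN a n = bbN a n * TT a n := by
    intro n
    by_cases h : n < k
    · have l2 := l2' n h
      rw [FFN_lt a h, uuN_lt a h, bbN_lt a h]
      simp only [TT]
      linear_combination l2
    · rw [FFN_ge a h, bbN_ge a h]; ring
  have hGoalP : ∏ j : Fin k, (1 - bb a j * (X 2 - X 3)) = ∏ i ∈ Finset.range k, vvN a i :=
    prod_fin_eq_range _ _ (fun i => vvN_val a i)
  have hGoalS : (∑ j : Fin k, bb a j
        * (∏ i ∈ Finset.univ.filter (· < j), (1 - bb a i * X 2))
        * (∏ i ∈ Finset.univ.filter (j < ·), (1 - bb a i * (X 2 - X 3))))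
      = ∑ j ∈ Finset.range k, bbN a j * (∏ i ∈ Finset.range j, uuN a i) *
          ∏ i ∈ Finset.Ico (j + 1) k, vvN a i := by
    refine sum_fin_eq_range _ _ (fun j => ?_)
    rw [bbN_val a j, ← prod_filter_lt j _ _ (fun i => uuN_val a i),
        ← prod_filter_gt j _ _ (fun i => vvN_val a i)]
  have hGsum : GA a - 1 = ∑ j ∈ Finset.range k, FFN a j := by
    rw [L1 a hk hmono,
      sum_fin_eq_range (fun j : Fin k => Fv a (a j)) (FFN a) (fun j => FFN_val a j)]
    ring
  have tel := telescope hveq k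
  rw [hGsum, hGoalP, hGoalS]
  have hbracket : (∏ i ∈ Finset.range k, vvN a i)
      - X 3 * (∑ j ∈ Finset.range k, bbN a j * (∏ i ∈ Finset.range j, uuN a i) *
          ∏ i ∈ Finset.Ico (j + 1) k, vvN a i) = ∏ i ∈ Finset.range k, uuN a i := by
    linear_combination tel
  rw [hbracket, Finset.sum_mul]
  have step : ∀ j ∈ Finset.range k, FFN a j * ∏ i ∈ Finset.range k, uuN a i
      = bbN a j * (∏ i ∈ Finset.range j, vvN a i) * ∏ i ∈ Finset.Ico (j + 1) k, uuN a i := by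
    intro j hj
    have hjk := Finset.mem_range.mp hj
    have hsplit : ∏ i ∈ Finset.range k, uuN a i
        = (∏ i ∈ Finset.range j, uuN a i) * (uuN a j * ∏ i ∈ Finset.Ico (j + 1) k, uuN a i) := by
      rw [← Finset.prod_range_mul_prod_Ico (uuN a) (le_of_lt hjk),
        Finset.prod_eq_prod_Ico_succ_bot hjk]
    calc FFN a j * ∏ i ∈ Finset.range k, uuN a i
        = (FFN a j * uuN a j) * ((∏ i ∈ Finset.range j, uuN a i)
            * ∏ i ∈ Finset.Ico (j + 1) k, uuN a i) := by rw [hsplit]; ring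
      _ = (bbN a j * TT a j) * ((∏ i ∈ Finset.range j, uuN a i)
            * ∏ i ∈ Finset.Ico (j + 1) k, uuN a i) := by rw [hFu j]
      _ = bbN a j * (TT a j * ∏ i ∈ Finset.range j, uuN a i)
            * ∏ i ∈ Finset.Ico (j + 1) k, uuN a i := by ring
      _ = bbN a j * (∏ i ∈ Finset.range j, vvN a i)
            * ∏ i ∈ Finset.Ico (j + 1) k, uuN a i := by rw [hTprodAt j]
  rw [Finset.sum_congr rfl step]
  exact (mirror hveq k).symm
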